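/- arXiv:2410.12451 — 5 statements merged into one kernel-verified Lean document; each statement's English description precedes it below -/
import Mathlib

section
/- Let k ≥ 2 and let H : ℝ → ℝᵏ be differentiable. Assume that for every nonzero θ ∈ ℝᵏ, the function x ↦ ⟨θ, H(x)⟩ is not constant on ℝ. Then there exist k distinct points x₁, …, x_k ∈ ℝ such that the derivative vectors H′(x₁), …, H′(x_k) are linearly independent in ℝᵏ. -/
/-- **Lemma 1.** For a strongly exponential family of size `k ≥ 2` with differentiable
sufficient statistics `H : ℝ → ℝᵏ` (i.e. no nonzero linear combination of the components
of `H` is constant on `ℝ`), there exist `k` distinct points whose derivative vectors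
`H′(x₁), …, H′(x_k)` are linearly independent in `ℝᵏ`. -/
theorem sufficient_statistics_deriv_linearIndependent
    (k : ℕ) (hk : 2 ≤ k) (H : ℝ → Fin k → ℝ)
    (hdiff : ∀ j : Fin k, Differentiable ℝ (fun x => H x j))
    (hnondeg : ∀ θ : Fin k → ℝ, θ ≠ 0 →
      ¬ ∃ a : ℝ, ∀ x : ℝ, (∑ j, θ j * H x j) = a) :
    ∃ x : Fin k → ℝ, Function.Injective x ∧
      LinearIndependent ℝ
        (fun i : Fin k => (fun j : Fin k => deriv (fun t => H t j) (x i))) := by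
  classical
  set D : ℝ → (Fin k → ℝ) := fun t j => deriv (fun s => H s j) t with hD
  -- Step 1: the derivative vectors span all of ℝᵏ
  have hspan : Submodule.span ℝ (Set.range D) = ⊤ := by
    by_contra hne
    obtain ⟨φ, hφ0, hφmap⟩ :=
      Submodule.exists_dual_map_eq_bot_of_lt_top (lt_top_iff_ne_top.2 hne)
        inferInstance
    set θ : Fin k → ℝ := fun j => φ (fun i => if j = i then 1 else 0) with hθ
    have hφeval : ∀ v : Fin k → ℝ, φ v = ∑ j, θ j * v j := by
      intro v
      rw [LinearMap.pi_apply_eq_sum_univ φ v]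
      exact Finset.sum_congr rfl fun j _ => by rw [smul_eq_mul, mul_comm]
    have hθne : θ ≠ 0 := by
      intro h0
      apply hφ0
      refine LinearMap.ext fun v => ?_
      rw [hφeval v, h0]
      simp
    refine hnondeg θ hθne ⟨∑ j, θ j * H 0 j, fun x => ?_⟩
    -- the function x ↦ ∑ θ j * H x j has zero derivative everywhere
    have hzero : ∀ t : ℝ, deriv (fun x => ∑ j, θ j * H x j) t = 0 := by
      intro t
      have hD0 : φ (D t) = 0 := by
        have hmem : φ (D t) ∈ Submodule.map φ (Submodule.span ℝ (Set.range D)) :=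
          ⟨D t, Submodule.subset_span ⟨t, rfl⟩, rfl⟩
        rw [hφmap] at hmem
        simpa using hmem
      have hder : HasDerivAt (fun x => ∑ j, θ j * H x j) (∑ j, θ j * D t j) t := by
        apply HasDerivAt.fun_sum
        intro j _
        exact ((hdiff j t).hasDerivAt).const_mul (θ j)
      rw [hder.deriv]
      rw [hφeval (D t)] at hD0
      exact hD0
    have hdiff' : Differentiable ℝ (fun x => ∑ j, θ j * H x j) := by
      apply Differentiable.fun_sum
      intro j _
      exact (hdiff j).const_mul (θ j)
    exact is_const_of_deriv_eq_zero hdiff' hzero x 0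
  -- Step 2: extract a basis from the spanning family
  obtain ⟨s, hsub, hspan', hli⟩ := exists_linearIndependent ℝ (Set.range D)
  rw [hspan] at hspan'
  have hsfin : s.Finite := hli.setFinite
  haveI := hsfin.fintype
  have hb : Module.Basis s ℝ (Fin k → ℝ) := Module.Basis.mk hli (by rw [Subtype.range_val]; exact hspan'.ge)
  have hcard : Fintype.card s = k := by
    have := Module.finrank_eq_card_basis hb
    simpa [Module.finrank_fin_fun] using this.symm
  obtain ⟨e⟩ : Nonempty (Fin k ≃ s) := ⟨(Fintype.equivFinOfCardEq hcard).symm⟩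
  have hchoice : ∀ i : Fin k, ∃ t : ℝ, D t = (e i : Fin k → ℝ) := fun i => hsub (e i).2
  choose x hx using hchoice
  refine ⟨x, ?_, ?_⟩
  · intro i j hij
    apply e.injective
    apply Subtype.ext
    rw [← hx i, ← hx j, hij]
  · have : (fun i : Fin k => (fun j : Fin k => deriv (fun t => H t j) (x i)))
        = (fun v : s => (v : Fin k → ℝ)) ∘ e := by
      funext i
      exact hx i
    rw [this]
    exact hli.comp e e.injective
end

section
/- Let d ≥ 1, let μ and ν be finite Borel measures on ℝᵈ, and let g : ℝᵈ → ℝ be Lebesgue-integrable such that the set {ω ∈ ℝᵈ : ĝ(ω) = 0} has Lebesgue measure zero, where ĝ is the Fourier transform of g. If ∫_{ℝᵈ} g(x − y) dμ(y) = ∫_{ℝᵈ} g(x − y) dν(y) for Lebesgue-almost every x ∈ ℝᵈ, then μ = ν. -/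
set_option maxHeartbeats 1000000

open MeasureTheory Filter Complex
open scoped FourierTransform RealInnerProductSpace Convolution

namespace DeconvAux

variable {d : ℕ}

lemma char_cont (w : EuclideanSpace ℝ (Fin d)) :
    Continuous fun x : EuclideanSpace ℝ (Fin d) => ((𝐞 (-⟪x, w⟫) : Circle) : ℂ) :=
  continuous_subtype_val.comp (Real.continuous_fourierChar.comp
    ((continuous_id.inner continuous_const).neg))

lemma fourier_conv (μ : Measure (EuclideanSpace ℝ (Fin d))) [IsFiniteMeasure μ]
    (g : EuclideanSpace ℝ (Fin d) → ℝ) (hg : Integrable g) (w : EuclideanSpace ℝ (Fin d)) :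
    ∫ x, (𝐞 (-⟪x, w⟫) : ℂ) * ((∫ y, g (x - y) ∂μ : ℝ) : ℂ) =
      (∫ y, (𝐞 (-⟪y, w⟫) : ℂ) ∂μ) * 𝓕 (fun x => (g x : ℂ)) w := by
  have hgc : Integrable (fun x => (g x : ℂ)) volume := hg.ofReal
  have hI : Integrable (fun p : EuclideanSpace ℝ (Fin d) × EuclideanSpace ℝ (Fin d) =>
      (𝐞 (-⟪p.1, w⟫) : ℂ) * (g (p.1 - p.2) : ℂ)) ((volume : Measure (EuclideanSpace ℝ (Fin d))).prod μ) := by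
    have base := (integrable_const (1 : ℂ) (μ := μ)).convolution_integrand
      (ContinuousLinearMap.mul ℂ ℂ) hgc
    simp only [ContinuousLinearMap.mul_apply', one_mul] at base
    exact base.bdd_mul ((char_cont w).comp continuous_fst).aestronglyMeasurable
      (c := 1) (ae_of_all _ fun p => (Circle.norm_coe _).le)
  calc ∫ x, (𝐞 (-⟪x, w⟫) : ℂ) * ((∫ y, g (x - y) ∂μ : ℝ) : ℂ)
      = ∫ x, ∫ y, (𝐞 (-⟪x, w⟫) : ℂ) * (g (x - y) : ℂ) ∂μ := by
        congr 1; funext x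
        rw [show ((∫ y, g (x - y) ∂μ : ℝ) : ℂ) = ∫ y, (g (x - y) : ℂ) ∂μ from integral_ofReal.symm,
          ← integral_const_mul]
    _ = ∫ y, (∫ x, (𝐞 (-⟪x, w⟫) : ℂ) * (g (x - y) : ℂ)) ∂μ := integral_integral_swap hI
    _ = ∫ y, (𝐞 (-⟪y, w⟫) : ℂ) * 𝓕 (fun x => (g x : ℂ)) w ∂μ := by
        congr 1; funext y
        rw [← integral_add_right_eq_self (fun x => (𝐞 (-⟪x, w⟫) : ℂ) * (g (x - y) : ℂ)) y]
        simp only [add_sub_cancel_right]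
        rw [Real.fourier_eq, ← integral_const_mul]
        congr 1; funext x
        have : (𝐞 (-⟪x + y, w⟫) : ℂ) = (𝐞 (-⟪y, w⟫) : ℂ) * (𝐞 (-⟪x, w⟫) : ℂ) := by
          rw [inner_add_left, neg_add, AddChar.map_add_eq_mul, Circle.coe_mul, mul_comm]
        rw [this, Circle.smul_def, smul_eq_mul]; ring
    _ = (∫ y, (𝐞 (-⟪y, w⟫) : ℂ) ∂μ) * 𝓕 (fun x => (g x : ℂ)) w := integral_mul_const _ _

lemma char_continuous (μ : Measure (EuclideanSpace ℝ (Fin d))) [IsFiniteMeasure μ] :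
    Continuous fun w : EuclideanSpace ℝ (Fin d) => ∫ y, (𝐞 (-⟪y, w⟫) : ℂ) ∂μ := by
  have h := VectorFourier.fourierIntegral_continuous Real.continuous_fourierChar
    (by exact continuous_inner) (f := fun _ : EuclideanSpace ℝ (Fin d) => (1 : ℂ))
    (integrable_const 1) (μ := μ) (L := innerₗ (EuclideanSpace ℝ (Fin d)))
  convert h using 2 with w
  simp [VectorFourier.fourierIntegral, Circle.smul_def]

lemma integral_fourier_schwartz (μ : Measure (EuclideanSpace ℝ (Fin d))) [IsFiniteMeasure μ]
    (ψ : SchwartzMap (EuclideanSpace ℝ (Fin d)) ℂ) :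
    ∫ x, 𝓕 (ψ : EuclideanSpace ℝ (Fin d) → ℂ) x ∂μ
      = ∫ w, ψ w * (∫ y, (𝐞 (-⟪y, w⟫) : ℂ) ∂μ) := by
  have hI : Integrable (fun p : EuclideanSpace ℝ (Fin d) × EuclideanSpace ℝ (Fin d) =>
      (𝐞 (-⟪p.2, p.1⟫) : ℂ) * ψ p.2) (μ.prod (volume : Measure (EuclideanSpace ℝ (Fin d)))) := by
    have base : Integrable (fun p : EuclideanSpace ℝ (Fin d) × EuclideanSpace ℝ (Fin d) =>
        (fun _ => (1:ℂ)) p.1 * ψ p.2) (μ.prod volume) :=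
      (integrable_const 1).mul_prod ψ.integrable
    simp only [one_mul] at base
    refine base.bdd_mul (c := 1) ?_ (ae_of_all _ fun p => (Circle.norm_coe _).le)
    refine Continuous.aestronglyMeasurable ?_
    exact continuous_subtype_val.comp (Real.continuous_fourierChar.comp
      ((continuous_snd.inner continuous_fst).neg))
  calc ∫ x, 𝓕 (ψ : EuclideanSpace ℝ (Fin d) → ℂ) x ∂μ
      = ∫ x, (∫ w, (𝐞 (-⟪w, x⟫) : ℂ) * ψ w) ∂μ := by
        simp only [Real.fourier_eq, Circle.smul_def, smul_eq_mul]
    _ = ∫ w, ∫ x, (𝐞 (-⟪w, x⟫) : ℂ) * ψ w ∂μ := integral_integral_swap hI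
    _ = ∫ w, ψ w * (∫ y, (𝐞 (-⟪y, w⟫) : ℂ) ∂μ) := by
        congr 1; funext w
        rw [mul_comm, ← integral_mul_const]
        congr 1; funext x
        rw [real_inner_comm]

noncomputable def toSchwartz (f : EuclideanSpace ℝ (Fin d) → ℂ) (h1 : ContDiff ℝ ((⊤ : ℕ∞) : WithTop ℕ∞) f)
    (h2 : HasCompactSupport f) : SchwartzMap (EuclideanSpace ℝ (Fin d)) ℂ where
  toFun := f
  smooth' := h1
  decay' := by
    intro k n
    have hc : Continuous fun x : EuclideanSpace ℝ (Fin d) =>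
        ‖x‖ ^ k * ‖iteratedFDeriv ℝ n f x‖ :=
      ((continuous_norm.pow k).mul (h1.continuous_iteratedFDeriv (by exact_mod_cast le_top)).norm)
    have hsupp : HasCompactSupport fun x : EuclideanSpace ℝ (Fin d) =>
        ‖x‖ ^ k * ‖iteratedFDeriv ℝ n f x‖ :=
      HasCompactSupport.mul_left ((h2.iteratedFDeriv n).norm)
    obtain ⟨C, hC⟩ := hc.bounded_above_of_compact_support hsupp
    exact ⟨C, fun x => (le_abs_self _).trans ((Real.norm_eq_abs _) ▸ hC x)⟩

lemma integral_cc_eq (μ ν : Measure (EuclideanSpace ℝ (Fin d)))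
    [IsFiniteMeasure μ] [IsFiniteMeasure ν]
    (hS : ∀ φ : SchwartzMap (EuclideanSpace ℝ (Fin d)) ℂ, ∫ x, φ x ∂μ = ∫ x, φ x ∂ν)
    (f : EuclideanSpace ℝ (Fin d) → ℝ) (hf : Continuous f) (hsupp : HasCompactSupport f) :
    ∫ x, f x ∂μ = ∫ x, f x ∂ν := by
  obtain ⟨C, hC⟩ := hf.bounded_above_of_compact_support hsupp
  set φn : ℕ → ContDiffBump (0 : EuclideanSpace ℝ (Fin d)) :=
    fun n => ⟨((n : ℝ) + 1)⁻¹ / 2, ((n : ℝ) + 1)⁻¹, by positivity, by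
      have : (0:ℝ) < ((n : ℝ) + 1)⁻¹ := by positivity
      linarith⟩ with hφn
  set k : ℕ → EuclideanSpace ℝ (Fin d) → ℝ :=
    fun n => convolution ((φn n).normed volume) f (ContinuousLinearMap.lsmul ℝ ℝ) volume with hk
  have hsmooth : ∀ n, ContDiff ℝ ((⊤ : ℕ∞) : WithTop ℕ∞) (k n) := fun n =>
    (φn n).hasCompactSupport_normed.contDiff_convolution_left _
      (φn n).contDiff_normed hf.locallyIntegrable
  have hkc : ∀ n, HasCompactSupport (k n) := fun n =>
    HasCompactSupport.convolution _ (φn n).hasCompactSupport_normed hsupp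
  have hbound : ∀ n x, ‖k n x‖ ≤ C := by
    intro n x
    have h1 : ‖k n x‖ ≤ ∫ t, (φn n).normed volume t * C := by
      apply norm_integral_le_of_norm_le (((φn n).integrable_normed).mul_const C)
      filter_upwards with t
      rw [ContinuousLinearMap.lsmul_apply, norm_smul,
        Real.norm_eq_abs ((φn n).normed volume t), _root_.abs_of_nonneg ((φn n).nonneg_normed t)]
      exact mul_le_mul_of_nonneg_left (hC _) ((φn n).nonneg_normed t)
    rwa [integral_mul_const, (φn n).integral_normed, one_mul] at h1
  have htend : ∀ x, Tendsto (fun n => k n x) atTop (nhds (f x)) := by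
    intro x
    apply ContDiffBump.convolution_tendsto_right_of_continuous _ hf
    simp only [hφn]
    simpa [one_div] using tendsto_one_div_add_atTop_nhds_zero_nat (𝕜 := ℝ)
  have hint : ∀ n, ∫ x, k n x ∂μ = ∫ x, k n x ∂ν := by
    intro n
    have hcd : ContDiff ℝ ((⊤ : ℕ∞) : WithTop ℕ∞) fun x => ((k n x : ℝ) : ℂ) :=
      Complex.ofRealCLM.contDiff.comp (hsmooth n)
    have hcs : HasCompactSupport fun x => ((k n x : ℝ) : ℂ) :=
      (hkc n).comp_left Complex.ofReal_zero
    have h2 : ∫ x, ((k n x : ℝ) : ℂ) ∂μ = ∫ x, ((k n x : ℝ) : ℂ) ∂ν :=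
      hS (toSchwartz _ hcd hcs)
    have h3 : ((∫ x, k n x ∂μ : ℝ) : ℂ) = ((∫ x, k n x ∂ν : ℝ) : ℂ) :=
      integral_ofReal.symm.trans (h2.trans integral_ofReal)
    exact_mod_cast h3
  have hlim : ∀ (ρ : Measure (EuclideanSpace ℝ (Fin d))) [IsFiniteMeasure ρ],
      Tendsto (fun n => ∫ x, k n x ∂ρ) atTop (nhds (∫ x, f x ∂ρ)) := by
    intro ρ _
    apply tendsto_integral_of_dominated_convergence (fun _ => C)
      (fun n => ((hsmooth n).continuous).aestronglyMeasurable) (integrable_const C)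
      (fun n => Eventually.of_forall fun x => hbound n x)
      (Eventually.of_forall fun x => htend x)
  have := (hlim μ)
  rw [funext hint] at this
  exact tendsto_nhds_unique this (hlim ν)

lemma measure_eq_of_cc (μ ν : Measure (EuclideanSpace ℝ (Fin d)))
    [IsFiniteMeasure μ] [IsFiniteMeasure ν]
    (hCc : ∀ f : EuclideanSpace ℝ (Fin d) → ℝ, Continuous f → HasCompactSupport f →
      ∫ x, f x ∂μ = ∫ x, f x ∂ν) : μ = ν := by
  have hK : ∀ K : Set (EuclideanSpace ℝ (Fin d)), IsCompact K → μ K = ν K := by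
    intro K hKc
    rcases K.eq_empty_or_nonempty with rfl | hne
    · simp
    have hKcl : IsClosed K := hKc.isClosed
    set f : ℕ → EuclideanSpace ℝ (Fin d) → ℝ :=
      fun n x => max 0 (1 - ((n : ℝ) + 1) * Metric.infDist x K) with hf
    have hfc : ∀ n, Continuous (f n) := fun n =>
      continuous_const.max (continuous_const.sub
        (continuous_const.mul (Metric.continuous_infDist_pt K)))
    have hfs : ∀ n, HasCompactSupport (f n) := by
      intro n
      apply HasCompactSupport.intro (hKc.cthickening (r := 1))
      intro x hx
      have hd : 1 ≤ Metric.infDist x K := by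
        by_contra h
        exact hx (Metric.thickening_subset_cthickening 1 K
          ((Metric.mem_thickening_iff_infDist_lt hne).mpr (lt_of_not_ge h)))
      have h1 : (1 : ℝ) ≤ ((n : ℝ) + 1) * Metric.infDist x K := by
        nlinarith [Metric.infDist_nonneg (x := x) (s := K), n.cast_nonneg (α := ℝ)]
      simp only [hf]
      exact max_eq_left (by linarith)
    have hbd : ∀ n x, ‖f n x‖ ≤ 1 := by
      intro n x
      rw [Real.norm_eq_abs, _root_.abs_of_nonneg (le_max_left _ _)]
      apply max_le zero_le_one
      nlinarith [Metric.infDist_nonneg (x := x) (s := K), n.cast_nonneg (α := ℝ)]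
    have htend : ∀ x, Tendsto (fun n => f n x) atTop (nhds (K.indicator (fun _ => (1:ℝ)) x)) := by
      intro x
      by_cases hx : x ∈ K
      · have : ∀ n, f n x = 1 := by
          intro n
          simp [hf, Metric.infDist_zero_of_mem hx]
        rw [funext this, Set.indicator_of_mem hx]
        exact tendsto_const_nhds
      · have hd : 0 < Metric.infDist x K := (hKcl.notMem_iff_infDist_pos hne).mp hx
        rw [Set.indicator_of_notMem hx]
        have hat : Tendsto (fun n : ℕ => ((n : ℝ) + 1) * Metric.infDist x K) atTop atTop :=
          (tendsto_natCast_atTop_atTop.atTop_add tendsto_const_nhds).atTop_mul_const hd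
        have hev : ∀ᶠ n in atTop, f n x = 0 := by
          filter_upwards [hat.eventually_ge_atTop 1] with n hn
          simp only [hf]
          exact max_eq_left (by linarith)
        exact Tendsto.congr' (hev.mono fun n h => h.symm) tendsto_const_nhds
    have hlim : ∀ (ρ : Measure (EuclideanSpace ℝ (Fin d))) [IsFiniteMeasure ρ],
        Tendsto (fun n => ∫ x, f n x ∂ρ) atTop (nhds ((ρ K).toReal)) := by
      intro ρ _
      have := tendsto_integral_of_dominated_convergence (μ := ρ)
        (F := fun n x => f n x) (f := K.indicator fun _ => (1:ℝ)) (fun _ => 1)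
        (fun n => (hfc n).aestronglyMeasurable) (integrable_const 1)
        (fun n => Eventually.of_forall (hbd n)) (Eventually.of_forall htend)
      rwa [integral_indicator_const (1:ℝ) hKc.measurableSet, smul_eq_mul, mul_one] at this
    have : (μ K).toReal = (ν K).toReal := by
      have h1 := hlim μ
      rw [funext fun n => hCc (f n) (hfc n) (hfs n)] at h1
      exact tendsto_nhds_unique h1 (hlim ν)
    exact (ENNReal.toReal_eq_toReal_iff' (measure_ne_top μ K) (measure_ne_top ν K)).mp this
  ext s hs
  rw [hs.measure_eq_iSup_isCompact, hs.measure_eq_iSup_isCompact]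
  exact iSup_congr fun K => iSup_congr fun _ => iSup_congr fun hKc => hK K hKc

end DeconvAux

open DeconvAux
open scoped FourierTransform

/-- **Deconvolution (Step I).** If `g : ℝᵈ → ℝ` is integrable and its Fourier transform
vanishes only on a Lebesgue-null set, then two finite Borel measures whose convolutions
with `g` agree Lebesgue-almost everywhere must be equal. -/
theorem deconvolution_of_fourier_ae_ne_zero
    (d : ℕ) (hd : 1 ≤ d)
    (μ ν : Measure (EuclideanSpace ℝ (Fin d)))
    [IsFiniteMeasure μ] [IsFiniteMeasure ν]
    (g : EuclideanSpace ℝ (Fin d) → ℝ) (hg : Integrable g)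
    (hfour : volume {ω : EuclideanSpace ℝ (Fin d) | 𝓕 (fun x => (g x : ℂ)) ω = 0} = 0)
    (heq : ∀ᵐ x ∂(volume : Measure (EuclideanSpace ℝ (Fin d))),
      ∫ y, g (x - y) ∂μ = ∫ y, g (x - y) ∂ν) :
    μ = ν := by
  have hconv : ∀ w, (∫ y, (𝐞 (-⟪y, w⟫) : ℂ) ∂μ) * 𝓕 (fun x => (g x : ℂ)) w
      = (∫ y, (𝐞 (-⟪y, w⟫) : ℂ) ∂ν) * 𝓕 (fun x => (g x : ℂ)) w := by
    intro w
    rw [← fourier_conv μ g hg w, ← fourier_conv ν g hg w]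
    exact integral_congr_ae (heq.mono fun x hx => by simp only [hx])
  have hne : ∀ᵐ w ∂(volume : Measure (EuclideanSpace ℝ (Fin d))),
      𝓕 (fun x => (g x : ℂ)) w ≠ 0 := by
    rw [ae_iff]
    simpa using hfour
  have hae : (fun w => ∫ y, (𝐞 (-⟪y, w⟫) : ℂ) ∂μ)
      =ᵐ[(volume : Measure (EuclideanSpace ℝ (Fin d)))]
      (fun w => ∫ y, (𝐞 (-⟪y, w⟫) : ℂ) ∂ν) :=
    hne.mono fun w hw => mul_right_cancel₀ hw (hconv w)
  have hchar : (fun w => ∫ y, (𝐞 (-⟪y, w⟫) : ℂ) ∂μ)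
      = (fun w => ∫ y, (𝐞 (-⟪y, w⟫) : ℂ) ∂ν) :=
    (Continuous.ae_eq_iff_eq volume (char_continuous μ) (char_continuous ν)).mp hae
  have hS : ∀ φ : SchwartzMap (EuclideanSpace ℝ (Fin d)) ℂ, ∫ x, φ x ∂μ = ∫ x, φ x ∂ν := by
    intro φ
    set ψ := (SchwartzMap.fourierTransformCLE ℝ
      (E := SchwartzMap (EuclideanSpace ℝ (Fin d)) ℂ) (F := SchwartzMap (EuclideanSpace ℝ (Fin d)) ℂ)).symm φ with hψ
    have h3 : 𝓕 (ψ : EuclideanSpace ℝ (Fin d) → ℂ) = φ := by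
      have h4 := (SchwartzMap.fourierTransformCLE ℝ
        (E := SchwartzMap (EuclideanSpace ℝ (Fin d)) ℂ) (F := SchwartzMap (EuclideanSpace ℝ (Fin d)) ℂ)).apply_symm_apply φ
      have h5 : ⇑(SchwartzMap.fourierTransformCLE ℝ
          (E := SchwartzMap (EuclideanSpace ℝ (Fin d)) ℂ) (F := SchwartzMap (EuclideanSpace ℝ (Fin d)) ℂ) ψ) = 𝓕 (ψ : EuclideanSpace ℝ (Fin d) → ℂ) :=
        rfl
      rw [← h5, hψ, h4]
    have h1 := integral_fourier_schwartz μ ψ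
    have h2 := integral_fourier_schwartz ν ψ
    rw [h3] at h1 h2
    have hch : ∀ w, (∫ y, (𝐞 (-⟪y, w⟫) : ℂ) ∂μ) = ∫ y, (𝐞 (-⟪y, w⟫) : ℂ) ∂ν :=
      fun w => congrFun hchar w
    rw [h1, h2]
    simp only [hch]
  exact measure_eq_of_cc μ ν (integral_cc_eq μ ν hS)
end

section
/- Let N ≥ 1, let X and Ω be nonempty sets, let u, v : X → ℝᴺ, a, b : X → ℝ, z, z̃ : Ω → ℝ, and λ, λ̃ : Ω → ℝᴺ. Suppose that for all x ∈ X and all w ∈ Ω, a(x) + ⟨u(x), λ(w)⟩ − z(w) = b(x) + ⟨v(x), λ̃(w)⟩ − z̃(w). Suppose moreover there exist N + 1 points w₀, w₁, …, w_N ∈ Ω such that the N × N matrix L whose l-th column is λ(w_l) − λ(w₀) is invertible. Then there exist an N × N real matrix M and a vector q ∈ ℝᴺ such that u(x) = M · v(x) + q for all x ∈ X. -/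
/-! Subtracting the identity at the base pivot `w₀` from the one at `w_l` cancels `a(x)` and
`b(x)`, leaving `⟨u(x), λ(w_l) − λ(w₀)⟩ = ⟨v(x), λ̃(w_l) − λ̃(w₀)⟩ + c_l` with `c_l` independent
of `x`. For `l = 1, …, N` these equations read `Lᵀ u(x) = L̃ᵀ v(x) + c`, and inverting `Lᵀ` gives
`u(x) = L⁻ᵀ L̃ᵀ v(x) + L⁻ᵀ c`. -/

open Matrix

namespace Matrix

variable {n R : Type*} [Fintype n] [DecidableEq n] [CommRing R]

theorem eq_inv_mul_mulVec_add_of_mulVec_eq {A B : Matrix n n R} {x y c : n → R}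
    (hA : IsUnit A.det) (h : A *ᵥ x = B *ᵥ y + c) :
    x = (A⁻¹ * B) *ᵥ y + A⁻¹ *ᵥ c := by
  rw [← mulVec_mulVec, ← mulVec_add, ← h, mulVec_mulVec, nonsing_inv_mul A hA, one_mulVec]

end Matrix

section Pivots

variable {R Ω ι : Type*} [CommRing R] [Fintype ι]

theorem dotProduct_sub_eq_of_forall_add_dotProduct_sub_eq {a b : R} {u v : ι → R}
    {lam lam' : Ω → ι → R} {z z' : Ω → R}
    (h : ∀ w, a + u ⬝ᵥ lam w - z w = b + v ⬝ᵥ lam' w - z' w) (w₁ w₀ : Ω) :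
    u ⬝ᵥ (lam w₁ - lam w₀) = v ⬝ᵥ (lam' w₁ - lam' w₀) + (z w₁ - z w₀ - (z' w₁ - z' w₀)) := by
  rw [dotProduct_sub, dotProduct_sub]
  linear_combination h w₁ - h w₀

def pivotDiffMatrix {N : ℕ} (lam : Ω → Fin N → R) (w : Fin (N + 1) → Ω) :
    Matrix (Fin N) (Fin N) R :=
  Matrix.of fun i l => lam (w l.succ) i - lam (w 0) i

theorem pivotDiffMatrix_transpose_mulVec {N : ℕ} (lam : Ω → Fin N → R) (w : Fin (N + 1) → Ω)
    (y : Fin N → R) :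
    (pivotDiffMatrix lam w)ᵀ *ᵥ y = fun l => y ⬝ᵥ (lam (w l.succ) - lam (w 0)) := by
  rw [mulVec_transpose]
  rfl

theorem pivotDiffMatrix_transpose_mulVec_eq {N : ℕ} {a b : R} {u v : Fin N → R}
    {lam lam' : Ω → Fin N → R} {z z' : Ω → R}
    (h : ∀ w, a + u ⬝ᵥ lam w - z w = b + v ⬝ᵥ lam' w - z' w) (w : Fin (N + 1) → Ω) :
    (pivotDiffMatrix lam w)ᵀ *ᵥ u = (pivotDiffMatrix lam' w)ᵀ *ᵥ v +
      fun l => z (w l.succ) - z (w 0) - (z' (w l.succ) - z' (w 0)) := by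
  simp only [pivotDiffMatrix_transpose_mulVec]
  funext l
  exact dotProduct_sub_eq_of_forall_add_dotProduct_sub_eq h _ _

end Pivots

theorem affine_relation_from_pivots_general
    (N : ℕ) (X Ω : Type*)
    (u v : X → Fin N → ℝ) (a b : X → ℝ) (z z' : Ω → ℝ)
    (lam lam' : Ω → Fin N → ℝ)
    (heq : ∀ (x : X) (w : Ω),
      a x + (∑ i, u x i * lam w i) - z w
        = b x + (∑ i, v x i * lam' w i) - z' w)
    (hpivots : ∃ w : Fin (N + 1) → Ω,
      IsUnit (Matrix.of (fun i l : Fin N => lam (w l.succ) i - lam (w 0) i)).det) :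
    ∃ (M : Matrix (Fin N) (Fin N) ℝ) (q : Fin N → ℝ),
      ∀ x : X, u x = M.mulVec (v x) + q := by
  obtain ⟨w, hL⟩ := hpivots
  have hLT : IsUnit (pivotDiffMatrix lam w)ᵀ.det := isUnit_det_transpose _ hL
  exact ⟨_, _, fun x => eq_inv_mul_mulVec_add_of_mulVec_eq hLT
    (pivotDiffMatrix_transpose_mulVec_eq (heq x) w)⟩

/-- **Step II (linear-algebraic core).** If
`a(x) + ⟨u(x), λ(w)⟩ − z(w) = b(x) + ⟨v(x), λ̃(w)⟩ − z̃(w)` for all `x ∈ X`, `w ∈ Ω`,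
and there are `N + 1` pivot points `w₀, …, w_N` such that the matrix `L` with `l`-th
column `λ(w_l) − λ(w₀)` is invertible, then `u(x) = M · v(x) + q` for some fixed
matrix `M` and vector `q`. -/
theorem affine_relation_from_pivots
    (N : ℕ) (hN : 1 ≤ N) (X Ω : Type*) [Nonempty X] [Nonempty Ω]
    (u v : X → Fin N → ℝ) (a b : X → ℝ) (z z' : Ω → ℝ)
    (lam lam' : Ω → Fin N → ℝ)
    (heq : ∀ (x : X) (w : Ω),
      a x + (∑ i, u x i * lam w i) - z w
        = b x + (∑ i, v x i * lam' w i) - z' w)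
    (hpivots : ∃ w : Fin (N + 1) → Ω,
      IsUnit (Matrix.of (fun i l : Fin N => lam (w l.succ) i - lam (w 0) i)).det) :
    ∃ (M : Matrix (Fin N) (Fin N) ℝ) (q : Fin N → ℝ),
      ∀ x : X, u x = M.mulVec (v x) + q :=
  affine_relation_from_pivots_general N X Ω u v a b z z' lam lam' heq hpivots
end

section
/- Let n ≥ 1 and k ≥ 2. For each i ∈ {1,…,n} let H_i : ℝ → ℝᵏ be differentiable and assume that for every nonzero θ ∈ ℝᵏ, the function x ↦ ⟨θ, H_i(x)⟩ is not constant on ℝ. Define H : ℝⁿ → ℝ^{nk} by H(c) = (H₁(c₁), …, H_n(c_n)) (concatenation of blocks), so that the Jacobian matrix J_H(c) ∈ ℝ^{(nk)×n} exists at every c and is block-structured with i-th column supported on the i-th block of k rows, where it equals H_i′(c_i). Then there exist k points c¹, …, cᵏ ∈ ℝⁿ such that the (nk) × (nk) matrix Q = (J_H(c¹) | J_H(c²) | ⋯ | J_H(cᵏ)), obtained by horizontally concatenating the Jacobian matrices of H at these points, is invertible. -/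
open Matrix Module

/-- Per-block lemma: for a single differentiable `g : ℝ → ℝᵏ` whose nonzero linear
combinations of components are nonconstant, there are `k` points at which the derivative
vectors form an invertible `k × k` matrix. -/
lemma block_isUnit (k : ℕ) (g : ℝ → Fin k → ℝ)
    (hdiff : ∀ j, Differentiable ℝ (fun x => g x j))
    (hnd : ∀ θ : Fin k → ℝ, θ ≠ 0 → ¬ ∃ a : ℝ, ∀ x : ℝ, (∑ j, θ j * g x j) = a) :
    ∃ x : Fin k → ℝ,
      IsUnit (Matrix.of fun (j m : Fin k) => deriv (fun t => g t j) (x m)) := by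
  classical
  set g' : ℝ → (Fin k → ℝ) := fun x j => deriv (fun t => g t j) x with hg'
  -- the derivative vectors span everything
  have hspan : Submodule.span ℝ (Set.range g') = ⊤ := by
    by_contra h
    obtain ⟨f, hf0, hfbot⟩ :=
      Submodule.exists_dual_map_eq_bot_of_lt_top (lt_top_iff_ne_top.2 h) inferInstance
    set θ : Fin k → ℝ := fun j => f (Pi.single j (1:ℝ)) with hθdef
    have hval : ∀ v : Fin k → ℝ, f v = ∑ j, θ j * v j := by
      intro v
      have hv : v = ∑ j, v j • (Pi.single j (1:ℝ) : Fin k → ℝ) := by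
        ext j; simp [Finset.sum_apply, Pi.single_apply]
      conv_lhs => rw [hv]
      rw [map_sum]
      simp [hθdef, mul_comm]
    have hθ : θ ≠ 0 := by
      intro h0
      apply hf0
      apply LinearMap.ext; intro v
      rw [hval v, h0]
      simp
    have hker : ∀ x : ℝ, f (g' x) = 0 := by
      intro x
      have : f (g' x) ∈ Submodule.map f (Submodule.span ℝ (Set.range g')) :=
        Submodule.mem_map_of_mem (Submodule.subset_span ⟨x, rfl⟩)
      rw [hfbot] at this
      simpa using this
    -- the combination ∑ θ j * g x j has zero derivative everywhere
    have hD : ∀ x : ℝ, HasDerivAt (fun t => ∑ j, θ j * g t j) 0 x := by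
      intro x
      have : HasDerivAt (fun t => ∑ j, θ j * g t j) (∑ j, θ j * g' x j) x := by
        apply HasDerivAt.fun_sum
        intro j _
        exact ((hdiff j).differentiableAt.hasDerivAt).const_mul (θ j)
      rwa [← hval (g' x), hker x] at this
    apply hnd θ hθ
    refine ⟨∑ j, θ j * g 0 j, fun x => ?_⟩
    exact is_const_of_deriv_eq_zero (fun t => (hD t).differentiableAt)
      (fun t => (hD t).deriv) x 0
  -- extract a basis from the spanning set
  obtain ⟨b, hbsub, hbspan, hbli⟩ := exists_linearIndependent ℝ (Set.range g')
  rw [hspan] at hbspan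
  let B : Basis b ℝ (Fin k → ℝ) := Basis.mk hbli (by rw [Subtype.range_coe]; exact hbspan.ge)
  haveI : Fintype b := FiniteDimensional.fintypeBasisIndex B
  have hcard : Fintype.card b = k := by
    have := Module.finrank_eq_card_basis B
    rw [Module.finrank_fin_fun] at this
    exact this.symm
  let e : Fin k ≃ b := (Fintype.equivFinOfCardEq hcard).symm
  have hli : LinearIndependent ℝ (fun m : Fin k => ((e m : Fin k → ℝ))) :=
    hbli.comp e e.injective
  -- choose preimage points
  have hx : ∀ m : Fin k, ∃ x : ℝ, g' x = (e m : Fin k → ℝ) := fun m => hbsub (e m).2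
  choose x hxe using hx
  refine ⟨x, ?_⟩
  rw [← Matrix.linearIndependent_cols_iff_isUnit]
  have : (fun m : Fin k => (Matrix.of fun (j m : Fin k) =>
      deriv (fun t => g t j) (x m))ᵀ m) = fun m : Fin k => ((e m : Fin k → ℝ)) := by
    funext m
    ext j
    have := congrFun (hxe m) j
    simpa [Matrix.transpose_apply, hg'] using this
  change LinearIndependent ℝ (fun m : Fin k => (Matrix.of fun (j m : Fin k) =>
      deriv (fun t => g t j) (x m))ᵀ m)
  rw [this]
  exact hli

/-- **Multivariate linear-independence lemma (Step III).** Given, for each `i ∈ {1,…,n}`,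
a differentiable map `H_i : ℝ → ℝᵏ` (`k ≥ 2`) such that no nonzero linear combination of
its components is constant on `ℝ`, there exist `k` points `c¹, …, cᵏ ∈ ℝⁿ` such that the
`(nk) × (nk)` matrix obtained by horizontally concatenating the Jacobian matrices of the
concatenated map `H(c) = (H₁(c₁), …, H_n(c_n))` at these points is invertible. -/
theorem jacobian_concatenation_invertible
    (n k : ℕ) (hn : 1 ≤ n) (hk : 2 ≤ k)
    (H : Fin n → ℝ → Fin k → ℝ)
    (hdiff : ∀ (i : Fin n) (j : Fin k), Differentiable ℝ (fun x => H i x j))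
    (hnondeg : ∀ (i : Fin n) (θ : Fin k → ℝ), θ ≠ 0 →
      ¬ ∃ a : ℝ, ∀ x : ℝ, (∑ j, θ j * H i x j) = a) :
    ∃ c : Fin k → (Fin n → ℝ),
      ∃ Q' : Matrix (Fin k × Fin n) (Fin n × Fin k) ℝ,
        (Matrix.of fun (p : Fin n × Fin k) (q : Fin k × Fin n) =>
            if p.1 = q.2 then deriv (fun t => H p.1 t p.2) (c q.1 q.2) else 0) * Q' = 1 ∧
        Q' * (Matrix.of fun (p : Fin n × Fin k) (q : Fin k × Fin n) =>
            if p.1 = q.2 then deriv (fun t => H p.1 t p.2) (c q.1 q.2) else 0) = 1 := by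
  classical
  -- choose good points for each block
  have hblocks : ∀ i : Fin n, ∃ x : Fin k → ℝ,
      IsUnit (Matrix.of fun (j m : Fin k) => deriv (fun t => H i t j) (x m)) :=
    fun i => block_isUnit k (H i) (hdiff i) (hnondeg i)
  choose x hxU using hblocks
  set c : Fin k → (Fin n → ℝ) := fun m i => x i m with hc
  set Bl : Fin n → Matrix (Fin k) (Fin k) ℝ :=
    fun i => Matrix.of fun (j m : Fin k) => deriv (fun t => H i t j) (x i m) with hBl
  set N : Matrix (Fin k × Fin n) (Fin k × Fin n) ℝ := Matrix.blockDiagonal Bl with hN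
  have hNunit : IsUnit N := by
    rw [Matrix.isUnit_iff_isUnit_det, Matrix.det_blockDiagonal]
    have hu : ∀ i : Fin n, IsUnit (Bl i).det :=
      fun i => (Matrix.isUnit_iff_isUnit_det _).mp (hxU i)
    choose u hu using hu
    have : ∏ i, (Bl i).det = ↑(∏ i, u i) := by
      rw [show ((∏ i, u i : ℝˣ) : ℝ) = ∏ i, ((u i : ℝ)) from map_prod (Units.coeHom ℝ) u Finset.univ]
      exact Finset.prod_congr rfl fun i _ => (hu i).symm
    rw [this]
    exact (∏ i, u i).isUnit
  have hNdet : IsUnit N.det := (Matrix.isUnit_iff_isUnit_det _).mp hNunit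
  set e : Fin n × Fin k ≃ Fin k × Fin n := Equiv.prodComm _ _ with he
  -- identify the goal matrix with a submatrix of the block-diagonal matrix
  have hM : (Matrix.of fun (p : Fin n × Fin k) (q : Fin k × Fin n) =>
      if p.1 = q.2 then deriv (fun t => H p.1 t p.2) (c q.1 q.2) else 0)
      = N.submatrix e (Equiv.refl _) := by
    ext ⟨i, j⟩ ⟨m, i'⟩
    simp only [Matrix.of_apply, Matrix.submatrix_apply, he, Equiv.prodComm_apply,
      Prod.swap_prod_mk, Equiv.refl_apply, hN, Matrix.blockDiagonal_apply, hBl]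
    by_cases h : i = i'
    · subst h; simp [hc]
    · simp [h]
  refine ⟨c, N⁻¹.submatrix (Equiv.refl _) e, ?_, ?_⟩
  · rw [hM, Matrix.submatrix_mul_equiv, Matrix.mul_nonsing_inv _ hNdet,
      Matrix.submatrix_one_equiv]
  · rw [hM, Matrix.submatrix_mul_equiv, Matrix.nonsing_inv_mul _ hNdet,
      Matrix.submatrix_one_equiv]
end

section
/- Let n ≥ 1. Let f, f̃ : ℝⁿ → ℝⁿ be injective, continuously differentiable maps whose derivative is invertible at every point; let π, π̃ : ℝⁿ → ℝ≥0 be Lebesgue-integrable probability densities; and let p_ε : ℝⁿ → ℝ be Lebesgue-integrable such that the set {ω ∈ ℝⁿ : ĝ(ω) = 0} has Lebesgue measure zero, where ĝ is the Fourier transform of p_ε. If ∫_{ℝⁿ} p_ε(x − f(c)) π(c) dc = ∫_{ℝⁿ} p_ε(x − f̃(c)) π̃(c) dc for Lebesgue-almost every x ∈ ℝⁿ, then for Lebesgue-almost every y ∈ ℝⁿ one has 1_{f(ℝⁿ)}(y) · π(f⁻¹(y)) · |det D(f⁻¹)(y)| = 1_{f̃(ℝⁿ)}(y) · π̃(f̃⁻¹(y))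 · |det D(f̃⁻¹)(y)|, where f⁻¹ and f̃⁻¹ denote the inverses of f and f̃ on their respective images, D(f⁻¹)(y) is the derivative of f⁻¹ at y, and 1_S is the indicator function of the set S. -/
open MeasureTheory
open scoped FourierTransform

open MeasureTheory Filter Function Set
open scoped FourierTransform Topology RealInnerProductSpace

section Aux
open scoped ContDiff

variable {n : ℕ}
local notation "𝕍" => EuclideanSpace ℝ (Fin n)

lemma det_ne_zero {f : 𝕍 → 𝕍} (hfd : ∀ c, Function.Bijective (fderiv ℝ f c)) (a : 𝕍) :
    ContinuousLinearMap.det (fderiv ℝ f a) ≠ 0 := by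
  have := (LinearEquiv.ofBijective ((fderiv ℝ f a) : 𝕍 →ₗ[ℝ] 𝕍) (hfd a)).isUnit_det'
  have hc : ((LinearEquiv.ofBijective ((fderiv ℝ f a) : 𝕍 →ₗ[ℝ] 𝕍) (hfd a)) : 𝕍 →ₗ[ℝ] 𝕍)
      = ((fderiv ℝ f a) : 𝕍 →ₗ[ℝ] 𝕍) := LinearMap.ext fun x => rfl
  rw [hc] at this
  simpa [ContinuousLinearMap.det] using this.ne_zero

lemma inv_pack {f : 𝕍 → 𝕍} (hf : ContDiff ℝ 1 f) (hfinj : Function.Injective f)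
    (hfd : ∀ c, Function.Bijective (fderiv ℝ f c)) (a : 𝕍) :
    Set.range f ∈ 𝓝 (f a) ∧
    |ContinuousLinearMap.det (fderiv ℝ (Function.invFun f) (f a))|
      = |ContinuousLinearMap.det (fderiv ℝ f a)|⁻¹ := by
  set A := fderiv ℝ f a with hA
  have h1 : LinearMap.ker A = ⊥ := LinearMap.ker_eq_bot.2 (by exact (hfd a).1)
  have h2 : LinearMap.range A = ⊤ := LinearMap.range_eq_top.2 (by exact (hfd a).2)
  let Φ : 𝕍 ≃L[ℝ] 𝕍 := ContinuousLinearEquiv.ofBijective A h1 h2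
  have hΦ : (Φ : 𝕍 →L[ℝ] 𝕍) = A := rfl
  have hstrict : HasStrictFDerivAt f (Φ : 𝕍 →L[ℝ] 𝕍) a := by
    rw [hΦ]
    exact (hf.contDiffAt).hasStrictFDerivAt one_ne_zero
  have hri := hstrict.eventually_right_inverse
  constructor
  · filter_upwards [hri] with y hy using ⟨_, hy⟩
  · have heqv : Function.invFun f =ᶠ[𝓝 (f a)] hstrict.localInverse f Φ a := by
      filter_upwards [hri] with y hy
      conv_lhs => rw [← hy]
      rw [Function.leftInverse_invFun hfinj]
    have hder : HasFDerivAt (Function.invFun f) ((Φ.symm : 𝕍 →L[ℝ] 𝕍)) (f a) :=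
      hstrict.to_localInverse.hasFDerivAt.congr_of_eventuallyEq heqv
    rw [hder.fderiv, ContinuousLinearEquiv.det_coe_symm, hΦ, abs_inv]

lemma isOpen_range_f {f : 𝕍 → 𝕍} (hf : ContDiff ℝ 1 f) (hfinj : Function.Injective f)
    (hfd : ∀ c, Function.Bijective (fderiv ℝ f c)) : IsOpen (Set.range f) := by
  rw [isOpen_iff_mem_nhds]; rintro y ⟨a, rfl⟩; exact (inv_pack hf hfinj hfd a).1

lemma cov {f : 𝕍 → 𝕍} (hf : ContDiff ℝ 1 f) (hfinj : Function.Injective f)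
    (hfd : ∀ c, Function.Bijective (fderiv ℝ f c)) (π : 𝕍 → ℝ) (φ : 𝕍 → ℝ) :
    ∫ y, φ y * Set.indicator (Set.range f)
        (fun y => π (Function.invFun f y)
          * |ContinuousLinearMap.det (fderiv ℝ (Function.invFun f) y)|) y
      = ∫ c, φ (f c) * π c := by
  have hopen := isOpen_range_f hf hfinj hfd
  have h1 : (fun y => φ y * Set.indicator (Set.range f)
        (fun y => π (Function.invFun f y)
          * |ContinuousLinearMap.det (fderiv ℝ (Function.invFun f) y)|) y)
      = Set.indicator (Set.range f) (fun y => φ y * (π (Function.invFun f y)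
          * |ContinuousLinearMap.det (fderiv ℝ (Function.invFun f) y)|)) := by
    funext y
    by_cases hy : y ∈ Set.range f <;> simp [hy]
  rw [h1, integral_indicator hopen.measurableSet, ← Set.image_univ,
    integral_image_eq_integral_abs_det_fderiv_smul volume MeasurableSet.univ
      (fun x _ => ((hf.differentiable one_ne_zero) x).hasFDerivAt.hasFDerivWithinAt)
      hfinj.injOn _]
  rw [setIntegral_univ]
  congr 1; funext c
  rw [Function.leftInverse_invFun hfinj c, (inv_pack hf hfinj hfd c).2, smul_eq_mul]
  have hd : |ContinuousLinearMap.det (fderiv ℝ f c)| ≠ 0 := abs_ne_zero.2 (det_ne_zero hfd c)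
  field_simp

lemma gf_integrable {f : 𝕍 → 𝕍} (hf : ContDiff ℝ 1 f) (hfinj : Function.Injective f)
    (hfd : ∀ c, Function.Bijective (fderiv ℝ f c)) {π : 𝕍 → ℝ} (hπint : Integrable π) :
    Integrable (Set.indicator (Set.range f)
        (fun y => π (Function.invFun f y)
          * |ContinuousLinearMap.det (fderiv ℝ (Function.invFun f) y)|)) := by
  have hopen := isOpen_range_f hf hfinj hfd
  rw [integrable_indicator_iff hopen.measurableSet]
  rw [← Set.image_univ,
    integrableOn_image_iff_integrableOn_abs_det_fderiv_smul volume MeasurableSet.univ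
      (fun x _ => ((hf.differentiable one_ne_zero) x).hasFDerivAt.hasFDerivWithinAt)
      hfinj.injOn]
  rw [integrableOn_univ]
  have h2 : (fun c => |ContinuousLinearMap.det (fderiv ℝ f c)| • (π (Function.invFun f (f c))
      * |ContinuousLinearMap.det (fderiv ℝ (Function.invFun f) (f c))|)) = π := by
    funext c
    rw [Function.leftInverse_invFun hfinj c, (inv_pack hf hfinj hfd c).2, smul_eq_mul]
    have hd : |ContinuousLinearMap.det (fderiv ℝ f c)| ≠ 0 := abs_ne_zero.2 (det_ne_zero hfd c)
    field_simp
  rw [h2]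
  exact hπint

lemma ae_eq_zero_of_fourier_eq_zero {u : 𝕍 → ℂ} (hu : Integrable u)
    (h : ∀ w, 𝓕 u w = 0) : ∀ᵐ x ∂(volume : Measure 𝕍), u x = 0 := by
  apply ae_eq_zero_of_integral_contDiff_smul_eq_zero (hu.locallyIntegrable)
  intro g hg hgsupp
  have hgc : ContDiff ℝ ∞ (fun x : 𝕍 => (g x : ℂ)) :=
    Complex.ofRealCLM.contDiff.comp hg
  have hsupp : HasCompactSupport (fun x : 𝕍 => (g x : ℂ)) :=
    hgsupp.comp_left Complex.ofReal_zero
  let G : SchwartzMap 𝕍 ℂ := ⟨fun x => (g x : ℂ), hgc, by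
    intro k m
    have h1 : HasCompactSupport (iteratedFDeriv ℝ m (fun x : 𝕍 => (g x : ℂ))) :=
      hsupp.iteratedFDeriv m
    have hFc : Continuous (fun x : 𝕍 =>
        ‖x‖ ^ k * ‖iteratedFDeriv ℝ m (fun x : 𝕍 => (g x : ℂ)) x‖) :=
      (continuous_norm.pow k).mul (hgc.continuous_iteratedFDeriv (mod_cast le_top)).norm
    have hFs : HasCompactSupport (fun x : 𝕍 =>
        ‖x‖ ^ k * ‖iteratedFDeriv ℝ m (fun x : 𝕍 => (g x : ℂ)) x‖) := by
      apply HasCompactSupport.mono h1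
      intro x hx
      simp only [Function.mem_support, ne_eq] at hx ⊢
      intro h0
      exact hx (by simp [h0])
    obtain ⟨C, hC⟩ := hFc.bddAbove_range_of_hasCompactSupport hFs
    exact ⟨C, fun x => hC ⟨x, rfl⟩⟩⟩
  let ψ := (SchwartzMap.fourierTransformCLE ℂ (SchwartzMap 𝕍 ℂ)).symm G
  have hψ : 𝓕 (⇑ψ) = ⇑G := by
    have h2 := (SchwartzMap.fourierTransformCLE ℂ (SchwartzMap 𝕍 ℂ)).apply_symm_apply G
    have h3 := SchwartzMap.fourierTransformCLE_apply (R := ℂ) (E := SchwartzMap 𝕍 ℂ) ψ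
    replace h3 := (h3.symm.trans h2).symm
    exact (congrArg (fun F : SchwartzMap 𝕍 ℂ => (F : 𝕍 → ℂ)) h3).symm
  have hflip : (innerₗ 𝕍).flip = innerₗ 𝕍 := by
    apply LinearMap.ext; intro x; apply LinearMap.ext; intro y
    simpa [LinearMap.flip_apply] using real_inner_comm y x
  have mult := VectorFourier.integral_fourierIntegral_smul_eq_flip
    (L := innerₗ 𝕍) (μ := (volume : Measure 𝕍)) (ν := (volume : Measure 𝕍))
    Real.continuous_fourierChar (by exact continuous_inner)
    ψ.integrable hu
  rw [hflip] at mult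
  have hR : ∫ x, ψ x • (VectorFourier.fourierIntegral 𝐞 volume (innerₗ 𝕍) u x) = 0 := by
    have : ∀ x, VectorFourier.fourierIntegral 𝐞 volume (innerₗ 𝕍) u x = 0 := h
    simp [this]
  rw [hR] at mult
  have hL : (fun ξ => (VectorFourier.fourierIntegral 𝐞 volume (innerₗ 𝕍) (⇑ψ) ξ) • u ξ)
      = fun ξ => g ξ • u ξ := by
    funext ξ
    have : VectorFourier.fourierIntegral 𝐞 volume (innerₗ 𝕍) (⇑ψ) ξ = 𝓕 (⇑ψ) ξ := rfl
    rw [this, hψ]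
    show (g ξ : ℂ) • u ξ = g ξ • u ξ
    rw [Complex.coe_smul]
  rw [hL] at mult
  exact mult

lemma fourier_translate (u : 𝕍 → ℂ) (y ξ : 𝕍) :
    ∫ x, (𝐞 (-⟪x, ξ⟫) : ℂ) * u (x - y) = (𝐞 (-⟪y, ξ⟫) : ℂ) * 𝓕 u ξ := by
  have h := integral_add_right_eq_self (μ := (volume : Measure 𝕍))
    (fun x => (𝐞 (-⟪x, ξ⟫) : ℂ) * u (x - y)) y
  rw [← h, Real.fourier_eq]
  simp_rw [add_sub_cancel_right, inner_add_left, neg_add, AddChar.map_add_eq_mul,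
    Circle.coe_mul, Circle.smul_def, mul_comm ((𝐞 (-⟪_, ξ⟫) : ℂ)) ((𝐞 (-⟪y, ξ⟫) : ℂ)),
    mul_assoc, integral_const_mul]
  congr 1

lemma fourier_conv {u w : 𝕍 → ℂ} (hu : Integrable u) (hw : Integrable w) (ξ : 𝕍) :
    𝓕 (fun x => ∫ y, u (x - y) * w y) ξ = 𝓕 u ξ * 𝓕 w ξ := by
  have hQ : Integrable (fun p : 𝕍 × 𝕍 => u (p.1 - p.2) * w p.2)
      ((volume : Measure 𝕍).prod volume) := by
    have := hw.convolution_integrand ((ContinuousLinearMap.mul ℂ ℂ).flip) hu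
    simpa [mul_comm] using this
  have hcont : Continuous (fun p : 𝕍 × 𝕍 => (𝐞 (-⟪p.1, ξ⟫) : ℂ)) := by
    apply Continuous.subtype_val
    exact Real.continuous_fourierChar.comp ((continuous_fst.inner continuous_const).neg)
  have hP : Integrable (fun p : 𝕍 × 𝕍 => (𝐞 (-⟪p.1, ξ⟫) : ℂ) * (u (p.1 - p.2) * w p.2))
      ((volume : Measure 𝕍).prod volume) :=
    hQ.bdd_mul hcont.aestronglyMeasurable (c := 1) (Eventually.of_forall fun p => (Circle.norm_coe _).le)
  calc 𝓕 (fun x => ∫ y, u (x - y) * w y) ξ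
      = ∫ x, ∫ y, (𝐞 (-⟪x, ξ⟫) : ℂ) * (u (x - y) * w y) := by
        rw [Real.fourier_eq]
        congr 1; funext x
        simp only [Circle.smul_def, smul_eq_mul]
        rw [← integral_const_mul]
    _ = ∫ y, ∫ x, (𝐞 (-⟪x, ξ⟫) : ℂ) * (u (x - y) * w y) := by
        exact integral_integral_swap hP
    _ = ∫ y, ((𝐞 (-⟪y, ξ⟫) : ℂ) * 𝓕 u ξ) * w y := by
        congr 1; funext y
        calc ∫ x, (𝐞 (-⟪x, ξ⟫) : ℂ) * (u (x - y) * w y)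
            = (∫ x, (𝐞 (-⟪x, ξ⟫) : ℂ) * u (x - y)) * w y := by
              simp_rw [← mul_assoc]
              rw [integral_mul_const]
          _ = ((𝐞 (-⟪y, ξ⟫) : ℂ) * 𝓕 u ξ) * w y := by rw [fourier_translate]
    _ = (∫ y, (𝐞 (-⟪y, ξ⟫) : ℂ) * w y) * 𝓕 u ξ := by
        simp_rw [mul_comm ((𝐞 (-⟪_, ξ⟫) : ℂ)) (𝓕 u ξ), mul_assoc]
        rw [integral_const_mul]
        ring
    _ = 𝓕 u ξ * 𝓕 w ξ := by
        simp only [Real.fourier_eq, Circle.smul_def, smul_eq_mul]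
        ring

lemma fourier_cont {u : 𝕍 → ℂ} (hu : Integrable u) : Continuous (𝓕 u) :=
  VectorFourier.fourierIntegral_continuous Real.continuous_fourierChar
    (by exact continuous_inner) hu

end Aux

/-- **Step I, equi-dimensional case.** Let `f, f̃ : ℝⁿ → ℝⁿ` be injective `C¹` maps with
invertible derivative at every point, `π, π̃` integrable probability densities, and `p_ε`
an integrable noise density whose Fourier transform vanishes only on a null set. If the
noisy densities agree a.e., then the noise-free transformed densities
`1_{f(ℝⁿ)}(y) · π(f⁻¹(y)) · |det D(f⁻¹)(y)|` agree for a.e. `y`. -/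
theorem transformed_densities_eq_of_noisy_densities_eq
    (n : ℕ) (hn : 1 ≤ n)
    (f f' : EuclideanSpace ℝ (Fin n) → EuclideanSpace ℝ (Fin n))
    (hf : ContDiff ℝ 1 f) (hf' : ContDiff ℝ 1 f')
    (hfinj : Function.Injective f) (hf'inj : Function.Injective f')
    (hfderiv : ∀ c, Function.Bijective (fderiv ℝ f c))
    (hf'deriv : ∀ c, Function.Bijective (fderiv ℝ f' c))
    (π π' : EuclideanSpace ℝ (Fin n) → ℝ)
    (hπ0 : ∀ c, 0 ≤ π c) (hπ'0 : ∀ c, 0 ≤ π' c)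
    (hπint : Integrable π) (hπ'int : Integrable π')
    (hπ1 : ∫ c, π c = 1) (hπ'1 : ∫ c, π' c = 1)
    (pe : EuclideanSpace ℝ (Fin n) → ℝ) (hpe : Integrable pe)
    (hfour : volume {ω : EuclideanSpace ℝ (Fin n) | 𝓕 (fun x => (pe x : ℂ)) ω = 0} = 0)
    (heq : ∀ᵐ x ∂(volume : Measure (EuclideanSpace ℝ (Fin n))),
      ∫ c, pe (x - f c) * π c = ∫ c, pe (x - f' c) * π' c) :
    ∀ᵐ y ∂(volume : Measure (EuclideanSpace ℝ (Fin n))),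
      Set.indicator (Set.range f)
        (fun y => π (Function.invFun f y) *
          |ContinuousLinearMap.det (fderiv ℝ (Function.invFun f) y)|) y
      = Set.indicator (Set.range f')
        (fun y => π' (Function.invFun f' y) *
          |ContinuousLinearMap.det (fderiv ℝ (Function.invFun f') y)|) y := by
  set gf : (EuclideanSpace ℝ (Fin n)) → ℝ := Set.indicator (Set.range f)
      (fun y => π (Function.invFun f y) *
        |ContinuousLinearMap.det (fderiv ℝ (Function.invFun f) y)|) with hgf
  set gf' : (EuclideanSpace ℝ (Fin n)) → ℝ := Set.indicator (Set.range f')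
      (fun y => π' (Function.invFun f' y) *
        |ContinuousLinearMap.det (fderiv ℝ (Function.invFun f') y)|) with hgf'
  have hgfint : Integrable gf := gf_integrable hf hfinj hfderiv hπint
  have hgf'int : Integrable gf' := gf_integrable hf' hf'inj hf'deriv hπ'int
  have hconv : ∀ x, ∫ y, pe (x - y) * gf y = ∫ c, pe (x - f c) * π c :=
    fun x => cov hf hfinj hfderiv π (fun y => pe (x - y))
  have hconv' : ∀ x, ∫ y, pe (x - y) * gf' y = ∫ c, pe (x - f' c) * π' c :=
    fun x => cov hf' hf'inj hf'deriv π' (fun y => pe (x - y))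
  set pec : (EuclideanSpace ℝ (Fin n)) → ℂ := fun x => (pe x : ℂ) with hpec
  set uc : (EuclideanSpace ℝ (Fin n)) → ℂ := fun y => (gf y : ℂ) with huc
  set u'c : (EuclideanSpace ℝ (Fin n)) → ℂ := fun y => (gf' y : ℂ) with hu'c
  have hpecint : Integrable pec := hpe.ofReal
  have hucint : Integrable uc := hgfint.ofReal
  have hu'cint : Integrable u'c := hgf'int.ofReal
  set A : (EuclideanSpace ℝ (Fin n)) → ℂ := fun x => ∫ y, pec (x - y) * uc y with hA
  set A' : (EuclideanSpace ℝ (Fin n)) → ℂ := fun x => ∫ y, pec (x - y) * u'c y with hA'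
  have hAre : ∀ x, A x = ((∫ y, pe (x - y) * gf y : ℝ) : ℂ) := by
    intro x
    rw [hA]
    simp only [hpec, huc, ← Complex.ofReal_mul]
    exact integral_ofReal
  have hA're : ∀ x, A' x = ((∫ y, pe (x - y) * gf' y : ℝ) : ℂ) := by
    intro x
    rw [hA']
    simp only [hpec, hu'c, ← Complex.ofReal_mul]
    exact integral_ofReal
  have hae : A =ᵐ[volume] A' := by
    filter_upwards [heq] with x hx
    rw [hAre, hA're, hconv, hconv', hx]
  have hfe : ∀ ξ, 𝓕 A ξ = 𝓕 A' ξ := by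
    intro ξ
    rw [Real.fourier_eq, Real.fourier_eq]
    exact integral_congr_ae (hae.mono fun x hx => by dsimp only; rw [hx])
  have hprod : ∀ ξ, 𝓕 pec ξ * 𝓕 uc ξ = 𝓕 pec ξ * 𝓕 u'c ξ := by
    intro ξ
    rw [← fourier_conv hpecint hucint ξ, ← fourier_conv hpecint hu'cint ξ]
    exact hfe ξ
  have haef : ∀ᵐ ξ ∂(volume : Measure (EuclideanSpace ℝ (Fin n))), 𝓕 uc ξ = 𝓕 u'c ξ := by
    have hne : ∀ᵐ ξ ∂(volume : Measure (EuclideanSpace ℝ (Fin n))), 𝓕 pec ξ ≠ 0 := by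
      rw [ae_iff]
      simpa [hpec] using hfour
    filter_upwards [hne] with ξ hξ
    exact mul_left_cancel₀ hξ (hprod ξ)
  have hfeq : 𝓕 uc = 𝓕 u'c :=
    ((fourier_cont hucint).ae_eq_iff_eq volume (fourier_cont hu'cint)).1 haef
  have hzero : ∀ ξ, 𝓕 (fun y => uc y - u'c y) ξ = 0 := by
    intro ξ
    rw [Real.fourier_eq]
    simp_rw [smul_sub]
    rw [integral_sub ((Real.fourierIntegral_convergent_iff ξ).2 hucint)
      ((Real.fourierIntegral_convergent_iff ξ).2 hu'cint)]
    have h1 : ∫ v, 𝐞 (-⟪v, ξ⟫) • uc v = 𝓕 uc ξ := rfl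
    have h2 : ∫ v, 𝐞 (-⟪v, ξ⟫) • u'c v = 𝓕 u'c ξ := rfl
    rw [h1, h2, hfeq, sub_self]
  have hdiff : ∀ᵐ y ∂(volume : Measure (EuclideanSpace ℝ (Fin n))), uc y - u'c y = 0 :=
    ae_eq_zero_of_fourier_eq_zero (hucint.sub hu'cint) hzero
  filter_upwards [hdiff] with y hy
  have h3 : uc y = u'c y := sub_eq_zero.1 hy
  rw [huc, hu'c] at h3
  simp only [Complex.ofReal_inj] at h3
  exact h3
end
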